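/- arXiv:2505.00305 — 5 statements merged into one kernel-verified Lean document; each statement's English description precedes it below -/
import Mathlib

section
/- If λ ≥ 1, then for every real x, the orbit f_λⁿ(x) converges to 0 as n → ∞, where f_λ(x) = sin(x)/(x² + λ). -/
/-!
Since `|sin t| ≤ |t|` and `t ^ 2 + λ ≥ t ^ 2 + 1`, the squares `u n = (f_λ^[n] x) ^ 2` satisfy
`u (n + 1) ≤ u n / (1 + u n)`, i.e. `1 / u` grows by at least one per step. Hence `u n ≤ 1 / n`
for `n ≥ 1`, whatever `x` is.
-/

open Filter Topology

lemma div_one_add_le_div_one_add {s t : ℝ} (hs : 0 ≤ s) (hst : s ≤ t) :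
    s / (1 + s) ≤ t / (1 + t) := by
  rw [div_le_div_iff₀ (by linarith) (by linarith)]
  nlinarith

lemma le_one_div_succ_of_le_div_one_add {u : ℕ → ℝ} (hu : ∀ n, 0 ≤ u n)
    (hstep : ∀ n, u (n + 1) ≤ u n / (1 + u n)) (n : ℕ) : u (n + 1) ≤ 1 / (n + 1) := by
  induction n with
  | zero =>
    calc u (0 + 1) ≤ u 0 / (1 + u 0) := hstep 0
      _ ≤ 1 := (div_le_one (by linarith [hu 0])).mpr (by linarith)
      _ = 1 / ((0 : ℕ) + 1) := by norm_num
  | succ n ih =>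
    calc u (n + 1 + 1) ≤ u (n + 1) / (1 + u (n + 1)) := hstep (n + 1)
      _ ≤ (1 / (n + 1)) / (1 + 1 / (n + 1)) := div_one_add_le_div_one_add (hu _) ih
      _ = 1 / ((n + 1 : ℕ) + 1) := by push_cast; field_simp

lemma tendsto_zero_of_le_div_one_add {u : ℕ → ℝ} (hu : ∀ n, 0 ≤ u n)
    (hstep : ∀ n, u (n + 1) ≤ u n / (1 + u n)) : Tendsto u atTop (𝓝 0) := by
  rw [← tendsto_add_atTop_iff_nat 1]
  exact squeeze_zero (fun n => hu _) (le_one_div_succ_of_le_div_one_add hu hstep)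
    tendsto_one_div_add_atTop_nhds_zero_nat

lemma sq_sin_div_sq_add_le {lam : ℝ} (hl : 1 ≤ lam) (t : ℝ) :
    (Real.sin t / (t ^ 2 + lam)) ^ 2 ≤ t ^ 2 / (1 + t ^ 2) := by
  rw [div_pow]
  apply div_le_div₀ (sq_nonneg t) Real.sin_sq_le_sq (by positivity)
  nlinarith [sq_nonneg t]

lemma tendsto_zero_of_tendsto_sq {u : ℕ → ℝ} (h : Tendsto (fun n => u n ^ 2) atTop (𝓝 0)) :
    Tendsto u atTop (𝓝 0) := by
  rw [tendsto_zero_iff_abs_tendsto_zero]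
  simpa [Function.comp_def, Real.sqrt_sq_eq_abs] using (Real.continuous_sqrt.tendsto 0).comp h

theorem stmt_3 (lam : ℝ) (hl : 1 ≤ lam) (x : ℝ) :
    Filter.Tendsto (fun n : ℕ => (fun t : ℝ => Real.sin t / (t ^ 2 + lam))^[n] x)
      Filter.atTop (nhds 0) := by
  apply tendsto_zero_of_tendsto_sq
  refine tendsto_zero_of_le_div_one_add (fun n => sq_nonneg _) fun n => ?_
  rw [Function.iterate_succ_apply']
  exact sq_sin_div_sq_add_le hl _
end

section
/- For every λ > 0, if z = x + iy with x ≠ 0 and y ≠ 0, then f_λ'(z) ≠ 0, where f_λ(z) = sin(z)/(z² + λ); that is, every critical point of f_λ lies on the real axis or the imaginary axis. -/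
/-!
A critical point off the axes solves `cos z · (z² + λ) = sin z · 2z`. Multiplying by
`conj (sin z · (z² + λ))` and using `cos z · conj (sin z) = (sin 2x - i sinh 2y) / 2` and
`z · conj (z² + λ) = x (|z|² + λ) - i y (|z|² - λ)` splits it into
`|z² + λ|² sin 2x = 4 x |sin z|² (|z|² + λ)` and `|z² + λ|² sinh 2y = 4 y |sin z|² (|z|² - λ)`.
Since `|sin t| < |t| < |sinh t|` for `t ≠ 0`, the first forces `|z² + λ|² > 2 |sin z|² (|z|² + λ)`
and the second `|z² + λ|² < 2 |sin z|² ||z|² - λ|`, incompatible when `λ ≥ 0`.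
-/

open ComplexConjugate

namespace Real

lemma abs_lt_of_mul_sin_two_mul_eq {N x a : ℝ} (hN : 0 < N) (hx : x ≠ 0)
    (h : N * sin (2 * x) = 2 * x * a) : |a| < N := by
  have hsin := abs_sin_lt_abs (mul_ne_zero two_ne_zero hx)
  have habs := congrArg abs h
  rw [abs_mul, abs_of_pos hN, abs_mul] at habs
  have hx2 : 0 < |2 * x| := abs_pos.2 (mul_ne_zero two_ne_zero hx)
  nlinarith [mul_lt_mul_of_pos_left hsin hN]

lemma lt_abs_of_mul_sinh_two_mul_eq {N y b : ℝ} (hN : 0 < N) (hy : y ≠ 0)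
    (h : N * sinh (2 * y) = 2 * y * b) : N < |b| := by
  have hy2 : 0 < |2 * y| := abs_pos.2 (mul_ne_zero two_ne_zero hy)
  have hsinh : |2 * y| < |sinh (2 * y)| := by
    rw [abs_sinh]
    exact self_lt_sinh_iff.2 hy2
  have habs := congrArg abs h
  rw [abs_mul, abs_of_pos hN, abs_mul] at habs
  nlinarith [mul_lt_mul_of_pos_left hsinh hN]

end Real

namespace Complex

lemma cos_mul_conj_sin (z : ℂ) :
    cos z * conj (sin z) = (Real.sin (2 * z.re) - Real.sinh (2 * z.im) * I) / 2 := by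
  have hsum : conj z + z = ((2 * z.re : ℝ) : ℂ) := by rw [add_comm, add_conj]
  have hdiff : conj z - z = -((2 * z.im : ℝ) : ℂ) * I := by
    rw [← neg_sub, sub_conj]; push_cast; ring_nf
  have h := congrArg₂ (· + ·) (sin_add (conj z) z) (sin_sub (conj z) z)
  simp only [hsum, hdiff, neg_mul, sin_neg, sin_mul_I, ← ofReal_sin, ← ofReal_sinh] at h
  rw [← sin_conj]
  linear_combination -h / 2

lemma mul_conj_sq_add_ofReal (z : ℂ) (c : ℝ) :
    z * conj (z ^ 2 + c) = z.re * (normSq z + c) - z.im * (normSq z - c) * I := by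
  apply Complex.ext <;>
  · simp only [pow_two, map_add, map_mul, conj_ofReal, mul_re, mul_im, add_re, add_im, sub_re,
      sub_im, conj_re, conj_im, ofReal_re, ofReal_im, I_re, I_im, normSq_apply, ofReal_add,
      ofReal_mul]
    ring

lemma sq_add_ofReal_ne_zero {z : ℂ} (hre : z.re ≠ 0) (him : z.im ≠ 0) (c : ℝ) :
    z ^ 2 + c ≠ 0 := by
  intro h
  have := congrArg im h
  simp only [pow_two, add_im, mul_im, ofReal_im, add_zero, zero_im] at this
  exact mul_ne_zero hre him (by linarith)

theorem cos_mul_sq_add_ofReal_ne_sin_mul {z : ℂ} (hre : z.re ≠ 0) (him : z.im ≠ 0) {c : ℝ}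
    (hc : 0 ≤ c) : cos z * (z ^ 2 + c) ≠ sin z * (2 * z) := by
  intro h
  set N := normSq (z ^ 2 + c)
  set S := normSq (sin z)
  have hN : 0 < N := normSq_pos.2 (sq_add_ofReal_ne_zero hre him c)
  have key : cos z * conj (sin z) * ((z ^ 2 + c) * conj (z ^ 2 + c)) =
      2 * (sin z * conj (sin z)) * (z * conj (z ^ 2 + c)) := by
    linear_combination (conj (sin z) * conj (z ^ 2 + c)) * h
  rw [cos_mul_conj_sin, mul_conj, mul_conj, mul_conj_sq_add_ofReal] at key
  obtain ⟨hre_part, him_part⟩ := Complex.ext_iff.1 key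
  simp only [mul_re, mul_im, div_ofNat_re, div_ofNat_im, sub_re, sub_im, add_re, add_im,
    ofReal_re, ofReal_im, I_re, I_im, re_ofNat, im_ofNat] at hre_part him_part
  have hlt := Real.abs_lt_of_mul_sin_two_mul_eq (a := 2 * S * (normSq z + c)) hN hre
    (by linarith)
  have hgt := Real.lt_abs_of_mul_sinh_two_mul_eq (b := 2 * S * (normSq z - c)) hN him
    (by linarith)
  have hS : 0 ≤ S := normSq_nonneg _
  have hsub_le_add : |normSq z - c| ≤ normSq z + c :=
    abs_sub_le_iff.2 ⟨by linarith, by linarith [normSq_nonneg z]⟩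
  rw [abs_mul, abs_of_nonneg (by positivity : 0 ≤ 2 * S)] at hgt
  nlinarith [le_abs_self (2 * S * (normSq z + c)), mul_le_mul_of_nonneg_left hsub_le_add hS]

end Complex

theorem stmt_8 (lam : ℝ) (hl : 0 < lam) (z : ℂ) (hre : z.re ≠ 0) (him : z.im ≠ 0) :
    deriv (fun w : ℂ => Complex.sin w / (w ^ 2 + (lam : ℂ))) z ≠ 0 := by
  have hden := Complex.sq_add_ofReal_ne_zero hre him lam
  have hderiv : HasDerivAt (fun w : ℂ => Complex.sin w / (w ^ 2 + (lam : ℂ))) _ z :=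
    (Complex.hasDerivAt_sin z).div ((hasDerivAt_pow 2 z).add_const (lam : ℂ)) hden
  rw [hderiv.deriv]
  refine div_ne_zero (sub_ne_zero.2 ?_) (pow_ne_zero 2 hden)
  simpa using Complex.cos_mul_sq_add_ofReal_ne_sin_mul hre him hl.le
end

section
/- Let h_λ(y) = sinh(y)/(λ − y²) for λ > 1. Then h_λ has a fixed point r_λ in (0, √λ): there exists r with 0 < r < √λ and sinh(r)/(λ − r²) = r; moreover h_λ(y) < y for 0 < y < r and h_λ(y) > y for r < y < √λ. -/
open Real Set

theorem stmt_14 (lam : ℝ) (hl : 1 < lam) :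
    ∃ r : ℝ, 0 < r ∧ r < Real.sqrt lam ∧ Real.sinh r / (lam - r ^ 2) = r ∧
      (∀ y : ℝ, 0 < y → y < r → Real.sinh y / (lam - y ^ 2) < y) ∧
      (∀ y : ℝ, r < y → y < Real.sqrt lam → y < Real.sinh y / (lam - y ^ 2)) := by
  have hlam0 : (0:ℝ) < lam := by linarith
  set F : ℝ → ℝ := fun y => Real.sinh y + y ^ 3 - lam * y with hF
  have hF0 : F 0 = 0 := by simp [hF]
  -- derivatives
  have hd : ∀ y : ℝ, HasDerivAt F (Real.cosh y + 3 * y ^ 2 - lam) y := by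
    intro y
    have h1 := (Real.hasDerivAt_sinh y)
    have h2 : HasDerivAt (fun y : ℝ => y ^ 3) (3 * y ^ 2) y := by
      simpa using hasDerivAt_pow 3 y
    have h3 : HasDerivAt (fun y : ℝ => lam * y) lam y := by
      simpa using (hasDerivAt_id y).const_mul lam
    exact (h1.add h2).sub h3
  have hderivF : deriv F = fun y => Real.cosh y + 3 * y ^ 2 - lam := by
    funext y; exact (hd y).deriv
  have hd2 : ∀ y : ℝ, HasDerivAt (deriv F) (Real.sinh y + 6 * y) y := by
    intro y
    rw [hderivF]
    have h1 := Real.hasDerivAt_cosh y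
    have h2 : HasDerivAt (fun y : ℝ => 3 * y ^ 2) (6 * y) y := by
      have := (hasDerivAt_pow 2 y).const_mul 3
      exact this.congr_deriv (by norm_num; ring)
    simpa using (h1.add h2).sub_const lam
  have hFc : Continuous F := by
    fun_prop
  -- strict convexity on Ici 0
  have hconv : StrictConvexOn ℝ (Ici (0:ℝ)) F := by
    apply strictConvexOn_of_deriv2_pos (convex_Ici 0) hFc.continuousOn
    intro x hx
    rw [interior_Ici, mem_Ioi] at hx
    have : deriv^[2] F x = Real.sinh x + 6 * x := by
      simp only [Function.iterate_succ, Function.iterate_zero, Function.comp_apply, id_eq]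
      exact (hd2 x).deriv
    rw [this]
    have : 0 < Real.sinh x := Real.sinh_pos_iff.mpr hx
    linarith
  -- find s with 0 < s < sqrt lam and F s < 0
  have hsqrt_pos : 0 < Real.sqrt lam := Real.sqrt_pos.mpr hlam0
  obtain ⟨s, hs0, hssq, hFs⟩ : ∃ s : ℝ, 0 < s ∧ s < Real.sqrt lam ∧ F s < 0 := by
    have hd0 : HasDerivWithinAt F (1 - lam) (Ioi 0) 0 := by
      have := (hd 0).hasDerivWithinAt (s := Ioi 0)
      simpa using this
    have hslope := hasDerivWithinAt_iff_tendsto_slope.mp hd0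
    have hIoi : (Ioi (0:ℝ)) \ {0} = Ioi 0 := by
      ext x
      constructor
      · rintro ⟨h, _⟩; exact h
      · intro h; exact ⟨h, h.ne'⟩
    rw [hIoi] at hslope
    have hev1 : ∀ᶠ y in nhdsWithin 0 (Ioi 0), slope F 0 y < 0 :=
      hslope (Iio_mem_nhds (by linarith))
    have hev2 : ∀ᶠ y in nhdsWithin 0 (Ioi 0), y < Real.sqrt lam :=
      eventually_nhdsWithin_of_eventually_nhds (eventually_lt_nhds hsqrt_pos)
    have hev3 : ∀ᶠ y in nhdsWithin (0:ℝ) (Ioi 0), y ∈ Ioi 0 := eventually_mem_nhdsWithin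
    obtain ⟨s, h1, h2, h3⟩ := (hev1.and (hev2.and hev3)).exists
    have hs0 : 0 < s := h3
    refine ⟨s, hs0, h2, ?_⟩
    have hsl : slope F 0 s = F s / s := by
      rw [slope_def_field, hF0]
      simp
    rw [hsl] at h1
    exact (div_neg_iff.mp h1).resolve_left (fun h => absurd hs0 (not_lt.mpr h.2.le)) |>.1
  -- F (sqrt lam) > 0
  have hsq : Real.sqrt lam ^ 2 = lam := Real.sq_sqrt hlam0.le
  have hFsqrt : 0 < F (Real.sqrt lam) := by
    have : F (Real.sqrt lam) = Real.sinh (Real.sqrt lam) := by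
      simp only [hF]
      nlinarith [hsq]
    rw [this]
    exact Real.sinh_pos_iff.mpr hsqrt_pos
  -- IVT
  obtain ⟨r, hr_mem, hFr⟩ : ∃ r ∈ Ioo s (Real.sqrt lam), F r = 0 := by
    have h := intermediate_value_Ioo hssq.le hFc.continuousOn
    have : (0:ℝ) ∈ Ioo (F s) (F (Real.sqrt lam)) := ⟨hFs, hFsqrt⟩
    obtain ⟨r, hr, hFr⟩ := h this
    exact ⟨r, hr, hFr⟩
  obtain ⟨hsr, hrsq⟩ := hr_mem
  have hr0 : 0 < r := hs0.trans hsr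
  -- helper: y < sqrt lam and 0 < y gives lam - y^2 > 0
  have hden : ∀ y : ℝ, 0 < y → y < Real.sqrt lam → 0 < lam - y ^ 2 := by
    intro y hy hysq
    have : y ^ 2 < lam := by
      have := Real.lt_sqrt hy.le |>.mp hysq
      linarith [this]
    linarith
  have hdenr := hden r hr0 hrsq
  refine ⟨r, hr0, hrsq, ?_, ?_, ?_⟩
  · rw [div_eq_iff hdenr.ne']
    have : Real.sinh r + r ^ 3 - lam * r = 0 := hFr
    nlinarith
  · intro y hy0 hyr
    have hysq : y < Real.sqrt lam := hyr.trans hrsq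
    have hdy := hden y hy0 hysq
    rw [div_lt_iff₀ hdy]
    have hFy : F y < 0 := by
      have hmem : y ∈ openSegment ℝ (0:ℝ) r := by
        rw [openSegment_eq_Ioo hr0]; exact ⟨hy0, hyr⟩
      have := hconv.lt_on_openSegment (self_mem_Ici) (le_of_lt hr0) hr0.ne hmem
      rw [hF0, hFr] at this
      simpa using this
    have : Real.sinh y + y ^ 3 - lam * y < 0 := hFy
    nlinarith
  · intro y hry hysq
    have hy0 : 0 < y := hr0.trans hry
    have hdy := hden y hy0 hysq
    rw [lt_div_iff₀ hdy]
    have hFy : 0 < F y := by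
      have hmem : r ∈ openSegment ℝ s y := by
        rw [openSegment_eq_Ioo (hsr.trans hry)]; exact ⟨hsr, hry⟩
      have := hconv.lt_on_openSegment (le_of_lt hs0) (le_of_lt hy0)
        (ne_of_lt (hsr.trans hry)) hmem
      rw [hFr] at this
      rcases lt_max_iff.mp this with h | h
      · exact absurd h (not_lt.mpr hFs.le)
      · exact h
    have : 0 < Real.sinh y + y ^ 3 - lam * y := hFy
    nlinarith
end

section
/- For all real x with 0 < x < π/2, (x² + λ + 2)·cos(x) + 6x·sin(x) > 0 for every λ > 0, and hence N''(x) = ((x² + λ + 6)·sin(x) − 4x·cos(x))·(x² + λ) + 12·sin(x) > 0 on (0, π/2). -/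
/-! On `(0, π/2)` both `sin` and `cos` are positive, so the first expression is a sum of positive
terms; and `tan x > x` gives `(x² + λ + 6) sin x > 4 x cos x`, which makes every term of the second
expression positive. -/

open Real

namespace Real

variable {x : ℝ}

lemma cos_pos_of_pos_of_lt_pi_div_two (hx : 0 < x) (hx' : x < π / 2) : 0 < cos x :=
  cos_pos_of_mem_Ioo ⟨by linarith [pi_pos], hx'⟩

lemma mul_cos_lt_sin (hx : 0 < x) (hx' : x < π / 2) : x * cos x < sin x := by
  have hcos := cos_pos_of_pos_of_lt_pi_div_two hx hx'
  rw [← lt_div_iff₀ hcos, ← tan_eq_sin_div_cos]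
  exact lt_tan hx hx'

lemma sin_pos_of_pos_of_lt_pi_div_two (hx : 0 < x) (hx' : x < π / 2) : 0 < sin x :=
  sin_pos_of_pos_of_lt_pi hx (by linarith [pi_pos])

lemma mul_cos_add_mul_sin_pos {a b : ℝ} (ha : 0 ≤ a) (hb : 0 < b) (hx : 0 < x)
    (hx' : x < π / 2) : 0 < a * cos x + b * x * sin x := by
  have hcos := cos_pos_of_pos_of_lt_pi_div_two hx hx'
  have hsin := sin_pos_of_pos_of_lt_pi_div_two hx hx'
  positivity

lemma mul_sin_sub_mul_cos_pos {a b : ℝ} (ha : 0 < a) (hab : b ≤ a) (hx : 0 < x)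
    (hx' : x < π / 2) : 0 < a * sin x - b * x * cos x := by
  have hxcos : 0 < x * cos x := mul_pos hx (cos_pos_of_pos_of_lt_pi_div_two hx hx')
  refine sub_pos.mpr ?_
  calc b * x * cos x = b * (x * cos x) := mul_assoc b x (cos x)
    _ ≤ a * (x * cos x) := mul_le_mul_of_nonneg_right hab hxcos.le
    _ < a * sin x := mul_lt_mul_of_pos_left (mul_cos_lt_sin hx hx') ha

end Real

theorem stmt_16 (lam : ℝ) (hl : 0 < lam) (x : ℝ) (hx : 0 < x) (hx' : x < Real.pi / 2) :
    0 < (x ^ 2 + lam + 2) * Real.cos x + 6 * x * Real.sin x ∧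
    0 < ((x ^ 2 + lam + 6) * Real.sin x - 4 * x * Real.cos x) * (x ^ 2 + lam)
        + 12 * Real.sin x := by
  refine ⟨mul_cos_add_mul_sin_pos (by positivity) (by norm_num) hx hx', ?_⟩
  have hbracket : 0 < (x ^ 2 + lam + 6) * sin x - 4 * x * cos x :=
    mul_sin_sub_mul_cos_pos (by positivity) (by linarith [sq_nonneg x]) hx hx'
  have hsin := sin_pos_of_pos_of_lt_pi_div_two hx hx'
  positivity
end

section
/- Suppose 0 < λ < 1 and the critical point p_λ ∈ (0, π) of f_λ(x) = sin(x)/(x² + λ) satisfies f_λ(p_λ) ≥ π. Then with J = [0, p_λ] and K = [p_λ, π], we have J ∪ K ⊆ f_λ(J) ∩ f_λ(K); that is, f_λ is turbulent on [−f_λ(p_λ), f_λ(p_λ)]. -/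
open Set

theorem Icc_union_Icc_subset_image_inter_image {f : ℝ → ℝ} {a p b : ℝ} (hap : a ≤ p)
    (hpb : p ≤ b) (hf : ContinuousOn f (Icc a b)) (ha : f a ≤ a) (hb : f b ≤ a) (hp : b ≤ f p) :
    Icc a p ∪ Icc p b ⊆ f '' Icc a p ∩ f '' Icc p b := by
  rw [Icc_union_Icc_eq_Icc hap hpb]
  refine subset_inter ?_ ?_
  · calc Icc a b ⊆ Icc (f a) (f p) := Icc_subset_Icc ha hp
      _ ⊆ f '' Icc a p := intermediate_value_Icc hap (hf.mono (Icc_subset_Icc_right hpb))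
  · calc Icc a b ⊆ Icc (f b) (f p) := Icc_subset_Icc hb hp
      _ ⊆ f '' Icc p b := intermediate_value_Icc' hpb (hf.mono (Icc_subset_Icc_left hap))

theorem stmt_17_general (lam : ℝ) (h0 : 0 < lam) (p : ℝ)
    (hp0 : 0 < p) (hpπ : p < Real.pi)
    (hmax : Real.pi ≤ Real.sin p / (p ^ 2 + lam)) :
    Set.Icc 0 p ∪ Set.Icc p Real.pi ⊆
      ((fun x : ℝ => Real.sin x / (x ^ 2 + lam)) '' Set.Icc 0 p) ∩
      ((fun x : ℝ => Real.sin x / (x ^ 2 + lam)) '' Set.Icc p Real.pi) := by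
  have hcont : Continuous fun x : ℝ => Real.sin x / (x ^ 2 + lam) :=
    Real.continuous_sin.div (by fun_prop) fun x => by positivity
  exact Icc_union_Icc_subset_image_inter_image hp0.le hpπ.le hcont.continuousOn
    (by simp) (by simp) hmax

theorem stmt_17 (lam : ℝ) (h0 : 0 < lam) (h1 : lam < 1) (p : ℝ)
    (hp0 : 0 < p) (hpπ : p < Real.pi)
    (hcrit : (p ^ 2 + lam) * Real.cos p - 2 * p * Real.sin p = 0)
    (hmax : Real.pi ≤ Real.sin p / (p ^ 2 + lam)) :
    Set.Icc 0 p ∪ Set.Icc p Real.pi ⊆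
      ((fun x : ℝ => Real.sin x / (x ^ 2 + lam)) '' Set.Icc 0 p) ∩
      ((fun x : ℝ => Real.sin x / (x ^ 2 + lam)) '' Set.Icc p Real.pi) :=
  stmt_17_general lam h0 p hp0 hpπ hmax
end
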